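/- Let G = (V,E) be a finite simple graph, let t ≥ 1 and f ≥ 0 be integers, and let H be a spanning subgraph of G. Suppose that for every edge uv ∈ E ∖ E(H) and every set F ⊆ E(H) with |F| ≤ f one has d_{H∖F}(u,v) ≤ t. Then H is an f-EFT t-spanner of G. (This is the correctness of the greedy algorithm for edge-fault-tolerant spanners: the greedy output satisfies the hypothesis, hence is a valid f-EFT t-spanner.) -/

import Mathlib

/-!
Fix faults `F` and follow a shortest path of `G ∖ F`. Each of its edges either survives in
`H ∖ F`, where it has length `1 ≤ t`, or is a non-spanner edge; only the faults `F ∩ E(H)` matter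
in `H`, and there are at most `f` of them, so the hypothesis replaces the edge by a path of length
at most `t` in `H ∖ F`. Concatenating these detours stretches the path by a factor of at most `t`.
-/

open SimpleGraph
open scoped ENNReal

/-- `H` is an `f`-edge-fault-tolerant (`f`-EFT) `t`-spanner of `G`: `H` is a subgraph of `G`
and for every fault set `F ⊆ E(G)` with `|F| ≤ f` and all `u, v ∈ V`,
`d_{H∖F}(u,v) ≤ t · d_{G∖F}(u,v)` (distances in `ℕ∞`, with `∞` if there is no path). -/
def IsEFTSpanner {V : Type*} (G H : SimpleGraph V) (f t : ℕ) : Prop :=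
  H ≤ G ∧ ∀ F : Set (Sym2 V), F ⊆ G.edgeSet → F.ncard ≤ f → ∀ u v : V,
    (H.deleteEdges F).edist u v ≤ (t : ℕ∞) * (G.deleteEdges F).edist u v

namespace SimpleGraph

variable {V : Type*} {G H : SimpleGraph V} {t : ℕ∞}

lemma Walk.edist_le_mul_length (h : ∀ a b, G.Adj a b → H.edist a b ≤ t) :
    ∀ {u v : V} (p : G.Walk u v), H.edist u v ≤ t * p.length
  | _, _, .nil => by simp
  | _, _, .cons hadj p =>
    calc H.edist _ _ ≤ H.edist _ _ + H.edist _ _ := SimpleGraph.edist_triangle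
      _ ≤ t + t * p.length := add_le_add (h _ _ hadj) (edist_le_mul_length h p)
      _ = t * (Walk.cons hadj p).length := by rw [Walk.length_cons]; push_cast; ring

lemma edist_le_mul_edist_of_forall_adj (ht : t ≠ 0) (h : ∀ a b, G.Adj a b → H.edist a b ≤ t)
    (u v : V) : H.edist u v ≤ t * G.edist u v := by
  by_cases hG : G.edist u v = ⊤
  · simp [hG, ENat.mul_top ht]
  · obtain ⟨p, hp⟩ := exists_walk_of_edist_ne_top hG
    exact hp ▸ p.edist_le_mul_length h

end SimpleGraph

/-- Correctness of the greedy algorithm for edge-fault-tolerant spanners: if `H` is a spanning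
subgraph of `G` such that for every non-spanner edge `uv ∈ E(G) ∖ E(H)` and every fault set
`F ⊆ E(H)` of size at most `f` one has `d_{H∖F}(u,v) ≤ t`, then `H` is an
`f`-EFT `t`-spanner of `G`. -/
theorem stmt1 {V : Type*} [Fintype V] (G H : SimpleGraph V) (t f : ℕ) (ht : 1 ≤ t)
    (hHG : H ≤ G)
    (hgreedy : ∀ u v : V, G.Adj u v → ¬ H.Adj u v →
      ∀ F : Set (Sym2 V), F ⊆ H.edgeSet → F.ncard ≤ f →
        (H.deleteEdges F).edist u v ≤ (t : ℕ∞)) :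
    IsEFTSpanner G H f t := by
  refine ⟨hHG, fun F _ hFf => edist_le_mul_edist_of_forall_adj (by positivity) fun a b hab => ?_⟩
  obtain ⟨hGab, habF⟩ := deleteEdges_adj.mp hab
  by_cases hHab : H.Adj a b
  · calc (H.deleteEdges F).edist a b ≤ 1 := (deleteEdges_adj.mpr ⟨hHab, habF⟩).toWalk.edist_le
      _ ≤ t := by exact_mod_cast ht
  · rw [deleteEdges_eq_inter_edgeSet]
    exact hgreedy a b hGab hHab _ Set.inter_subset_right
      ((Set.ncard_inter_le_ncard_left F _).trans hFf)
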